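/- Let (Ω, 𝓔, μ) be a complete probability space, τ : Ω → Ω a measure-preserving ergodic transformation, H a separable complex Hilbert space, and T : Ω → (H →L[ℂ] H) a random bounded operator, i.e. ω ↦ T ω f is measurable for every f ∈ H. Assume T is unitarily invariant under τ: for every ω there exists a unitary operator V ω on H with T (τ ω) = (V ω) ∘ (T ω) ∘ (V ω)⁻¹. Then there exists a compact set K ⊆ ℂ such that spectrum ℂ (T ω) = K for μ-almost every ω; i.e. the spectrum of a metrically transitive random bounded operator is represented by a fixed set. -/

import Mathlib

/-!
For an operator `A` let `m(A) = inf_{‖x‖ = 1} ‖A x‖`, and for an operator `S` on a Hilbert space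
put `ρ_S(z) = min (m (z - S)) (m ((z - S)†))`. An operator is invertible iff it and its adjoint
are bounded below, so `ρ_S(z) > 0` exactly off the spectrum of `S`. The function `ρ_S` is
continuous in `z` (as `m` is 1-Lipschitz) and invariant under unitary conjugation of `S`, and
infima over a countable dense set of unit vectors make `ω ↦ ρ_{T ω}(z)` measurable. By ergodicity
`ρ_{T ω}` is therefore a.e. constant on a countable dense subset of `ℂ`, hence a.e. constant, and
so is the spectrum of `T ω`.
-/

open MeasureTheory ContinuousLinearMap Metric

section NormAsSupremum

variable {𝕜 H Ω : Type*} [RCLike 𝕜] [NormedAddCommGroup H] [InnerProductSpace 𝕜 H]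
  [MeasurableSpace Ω]

lemma norm_eq_iSup_norm_inner_of_dense {D : Set (sphere (0 : H) 1)} (hD : Dense D)
    (v : H) : ‖v‖ = ⨆ y : D, ‖inner 𝕜 (y : H) v‖ := by
  rw [hD.ciSup' (f := fun y : sphere (0 : H) 1 => ‖inner 𝕜 (y : H) v‖) (by fun_prop),
    ← innerSL_apply_norm 𝕜 v, ← sSup_sphere_eq_norm, sSup_image']
  simp only [innerSL_apply_apply, norm_inner_symm]

lemma measurable_norm_of_measurable_inner [SecondCountableTopology H] {X : Ω → H}
    (hX : ∀ y, Measurable fun ω => inner 𝕜 y (X ω)) : Measurable fun ω => ‖X ω‖ := by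
  obtain ⟨D, hDc, hD⟩ := TopologicalSpace.exists_countable_dense (sphere (0 : H) 1)
  have := hDc.to_subtype
  simp only [norm_eq_iSup_norm_inner_of_dense (𝕜 := 𝕜) hD]
  exact Measurable.iSup fun y => (hX y).norm

end NormAsSupremum

namespace ContinuousLinearMap

variable {𝕜 E F G : Type*} [RCLike 𝕜]
  [NormedAddCommGroup E] [NormedSpace 𝕜 E] [NormedAddCommGroup F] [NormedSpace 𝕜 F]
  [NormedAddCommGroup G] [NormedSpace 𝕜 G]

noncomputable def minModulus (A : E →L[𝕜] F) : ℝ := ⨅ x : sphere (0 : E) 1, ‖A x‖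

lemma minModulus_le (A : E →L[𝕜] F) {x : E} (hx : ‖x‖ = 1) : A.minModulus ≤ ‖A x‖ :=
  ciInf_le ⟨0, by rintro _ ⟨y, rfl⟩; positivity⟩ (⟨x, by simpa using hx⟩ : sphere (0 : E) 1)

lemma le_minModulus [Nontrivial E] {A : E →L[𝕜] F} {c : ℝ} (h : ∀ x : E, ‖x‖ = 1 → c ≤ ‖A x‖) :
    c ≤ A.minModulus :=
  let _ : NormedSpace ℝ E := NormedSpace.restrictScalars ℝ 𝕜 E
  have : Nonempty (sphere (0 : E) 1) := (NormedSpace.sphere_nonempty.mpr zero_le_one).to_subtype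
  le_ciInf fun x => h x (by simp)

lemma minModulus_mul_norm_le (A : E →L[𝕜] F) (x : E) : A.minModulus * ‖x‖ ≤ ‖A x‖ := by
  rcases eq_or_ne x 0 with rfl | hx
  · simp
  have hx' : 0 < ‖x‖ := norm_pos_iff.mpr hx
  have hu : ‖((‖x‖⁻¹ : ℝ) : 𝕜) • x‖ = 1 := by
    rw [norm_smul, RCLike.norm_ofReal, abs_inv, abs_norm, inv_mul_cancel₀ hx'.ne']
  have := A.minModulus_le hu
  rw [map_smul, norm_smul, RCLike.norm_ofReal, abs_inv, abs_norm, le_inv_mul_iff₀ hx'] at this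
  linarith [mul_comm A.minModulus ‖x‖]

lemma minModulus_pos_iff [Nontrivial E] {A : E →L[𝕜] F} :
    0 < A.minModulus ↔ ∃ K, AntilipschitzWith K A := by
  rw [antilipschitzWith_iff_exists_mul_le_norm]
  constructor
  · exact fun h => ⟨_, h, A.minModulus_mul_norm_le⟩
  · rintro ⟨c, hc, hA⟩
    exact hc.trans_le (le_minModulus fun x hx => by simpa [hx] using hA x)

lemma minModulus_le_add_norm_sub [Nontrivial E] (A B : E →L[𝕜] F) :
    A.minModulus ≤ B.minModulus + ‖A - B‖ := by
  suffices A.minModulus - ‖A - B‖ ≤ B.minModulus by linarith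
  refine le_minModulus fun x hx => ?_
  have h := (A - B).le_opNorm x
  rw [hx, mul_one, sub_apply] at h
  linarith [A.minModulus_le hx, norm_le_norm_add_norm_sub' (A x) (B x)]

lemma lipschitzWith_minModulus [Nontrivial E] : LipschitzWith 1 (minModulus : (E →L[𝕜] F) → ℝ) :=
  LipschitzWith.of_le_add fun A B => by
    simpa [dist_eq_norm] using minModulus_le_add_norm_sub A B

lemma minModulus_linearIsometryEquiv_comp (V : F ≃ₗᵢ[𝕜] G) (A : E →L[𝕜] F) :
    ((V : F →L[𝕜] G) ∘L A).minModulus = A.minModulus := by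
  simp [minModulus]

lemma minModulus_comp_linearIsometryEquiv (A : F →L[𝕜] G) (V : E ≃ₗᵢ[𝕜] F) :
    (A ∘L (V : E →L[𝕜] F)).minModulus = A.minModulus := by
  let W : sphere (0 : E) 1 → sphere (0 : F) 1 := fun x => ⟨V x, by simp⟩
  have hW : Function.Surjective W := fun y =>
    ⟨⟨V.symm y, by simp⟩, Subtype.ext (V.apply_symm_apply y)⟩
  exact hW.iInf_comp fun y => ‖A y‖

lemma minModulus_eq_iInf_of_dense {D : Set (sphere (0 : E) 1)} (hD : Dense D) (A : E →L[𝕜] F) :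
    A.minModulus = ⨅ x : D, ‖A x‖ :=
  (hD.ciInf' (by fun_prop)).symm

lemma measurable_minModulus {Ω : Type*} [MeasurableSpace Ω] [SecondCountableTopology E]
    {A : Ω → E →L[𝕜] F} (hA : ∀ x, Measurable fun ω => ‖A ω x‖) :
    Measurable fun ω => (A ω).minModulus := by
  obtain ⟨D, hDc, hD⟩ := TopologicalSpace.exists_countable_dense (sphere (0 : E) 1)
  have := hDc.to_subtype
  simp only [minModulus_eq_iInf_of_dense hD]
  exact Measurable.iInf fun x => hA x

section InnerProductSpace

variable {H : Type*} [NormedAddCommGroup H] [InnerProductSpace 𝕜 H] [CompleteSpace H]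

lemma isUnit_iff_antilipschitz_and_antilipschitz_adjoint {A : H →L[𝕜] H} :
    IsUnit A ↔ (∃ K, AntilipschitzWith K A) ∧ ∃ K, AntilipschitzWith K (adjoint A) := by
  constructor
  · intro hA
    have hA' : IsUnit (adjoint A) := by simpa [← star_eq_adjoint] using hA.star
    exact ⟨antilipschitz_of_isEmbedding _ (isHomeomorph_of_isUnit hA).isEmbedding,
      antilipschitz_of_isEmbedding _ (isHomeomorph_of_isUnit hA').isEmbedding⟩
  · rintro ⟨hA, _, hA'⟩
    rw [isUnit_iff_bijective, bijective_iff_dense_range_and_antilipschitz]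
    refine ⟨?_, hA⟩
    rw [Submodule.topologicalClosure_eq_top_iff, orthogonal_range]
    exact LinearMap.ker_eq_bot.mpr hA'.injective

lemma isUnit_iff_minModulus_pos [Nontrivial H] {A : H →L[𝕜] H} :
    IsUnit A ↔ 0 < A.minModulus ∧ 0 < (adjoint A).minModulus := by
  rw [isUnit_iff_antilipschitz_and_antilipschitz_adjoint, minModulus_pos_iff, minModulus_pos_iff]

/-- On the resolvent set of `S` this is `‖(z - S)⁻¹‖⁻¹`. -/
noncomputable def resolventModulus (S : H →L[𝕜] H) (z : 𝕜) : ℝ :=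
  min (algebraMap 𝕜 _ z - S).minModulus (adjoint (algebraMap 𝕜 _ z - S)).minModulus

lemma resolventModulus_pos_iff [Nontrivial H] {S : H →L[𝕜] H} {z : 𝕜} :
    0 < resolventModulus S z ↔ z ∈ resolventSet 𝕜 S := by
  rw [resolventModulus, lt_min_iff, resolventSet, Set.mem_ofPred_eq, isUnit_iff_minModulus_pos]

lemma continuous_resolventModulus [Nontrivial H] (S : H →L[𝕜] H) :
    Continuous (resolventModulus S) := by
  have hshift : Continuous fun z : 𝕜 => algebraMap 𝕜 (H →L[𝕜] H) z - S :=
    (continuous_algebraMap 𝕜 _).sub continuous_const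
  have hmin := (lipschitzWith_minModulus (𝕜 := 𝕜) (E := H) (F := H)).continuous
  exact (hmin.comp hshift).min
    (hmin.comp ((adjoint (𝕜 := 𝕜) (E := H) (F := H)).continuous.comp hshift))

lemma resolventModulus_conj (V : H ≃ₗᵢ[𝕜] H) (S : H →L[𝕜] H) :
    resolventModulus ((V : H →L[𝕜] H) ∘L S ∘L (V.symm : H →L[𝕜] H)) = resolventModulus S := by
  have hconj : ∀ B : H →L[𝕜] H, adjoint ((V : H →L[𝕜] H) ∘L B ∘L (V.symm : H →L[𝕜] H)) =
      (V : H →L[𝕜] H) ∘L adjoint B ∘L (V.symm : H →L[𝕜] H) := fun B => by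
    rw [adjoint_comp, adjoint_comp, LinearIsometryEquiv.adjoint_eq_symm,
      LinearIsometryEquiv.adjoint_eq_symm, LinearIsometryEquiv.symm_symm, comp_assoc]
  have hshift : ∀ z : 𝕜, algebraMap 𝕜 _ z - (V : H →L[𝕜] H) ∘L S ∘L (V.symm : H →L[𝕜] H) =
      (V : H →L[𝕜] H) ∘L (algebraMap 𝕜 _ z - S) ∘L (V.symm : H →L[𝕜] H) := fun z => by
    ext x
    simp [Algebra.algebraMap_eq_smul_one]
  funext z
  simp only [resolventModulus, hshift, hconj, minModulus_linearIsometryEquiv_comp,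
    minModulus_comp_linearIsometryEquiv]

lemma spectrum_eq_of_eqOn_resolventModulus [Nontrivial H] {S S' : H →L[𝕜] H} {Z : Set 𝕜}
    (hZ : Dense Z) (h : Set.EqOn (resolventModulus S) (resolventModulus S') Z) :
    spectrum 𝕜 S = spectrum 𝕜 S' := by
  have h' := (continuous_resolventModulus S).ext_on hZ (continuous_resolventModulus S') h
  ext z
  rw [spectrum, spectrum, Set.mem_compl_iff, Set.mem_compl_iff, ← resolventModulus_pos_iff,
    ← resolventModulus_pos_iff, h']

lemma measurable_resolventModulus {Ω : Type*} [MeasurableSpace Ω] [SecondCountableTopology H]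
    [MeasurableSpace H] [BorelSpace H] {T : Ω → H →L[𝕜] H}
    (hT : ∀ x, Measurable fun ω => T ω x) (z : 𝕜) :
    Measurable fun ω => resolventModulus (T ω) z := by
  have hshift : ∀ x, Measurable fun ω => (algebraMap 𝕜 (H →L[𝕜] H) z - T ω) x := fun x => by
    simpa [Algebra.algebraMap_eq_smul_one] using (hT x).const_sub (z • x)
  unfold resolventModulus
  refine (measurable_minModulus fun x => (hshift x).norm).min
    (measurable_minModulus fun x => measurable_norm_of_measurable_inner (𝕜 := 𝕜) fun y => ?_)
  simpa only [adjoint_inner_right] using (hshift y).inner_const (𝕜 := 𝕜) (c := x)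

end InnerProductSpace

end ContinuousLinearMap

lemma PreErgodic.exists_ae_forall_eq_of_comp_eq {Ω ι : Type*} [MeasurableSpace Ω]
    {μ : Measure Ω} [NeZero μ] {τ : Ω → Ω} [Countable ι] (hτ : PreErgodic τ μ)
    {f : ι → Ω → ℝ} (hf : ∀ i, Measurable (f i)) (hinv : ∀ i, f i ∘ τ = f i) :
    ∃ ω₀, ∀ᵐ ω ∂μ, ∀ i, f i ω = f i ω₀ := by
  obtain ⟨c, hc⟩ := hτ.ae_eq_const_of_ae_eq_comp (g := fun ω i => f i ω)
    (measurable_pi_lambda _ hf) (funext fun ω => funext fun i => congrFun (hinv i) ω)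
  obtain ⟨ω₀, hω₀⟩ := hc.exists
  exact ⟨ω₀, hc.mono fun ω hω i => congrFun (hω.trans hω₀.symm) i⟩

theorem spectrum_of_metrically_transitive_operator_ae_constant_general
    {Ω : Type*} [MeasurableSpace Ω] (μ : Measure Ω) [IsProbabilityMeasure μ]
    {τ : Ω → Ω} (hτ : Ergodic τ μ)
    {H : Type*} [NormedAddCommGroup H] [InnerProductSpace ℂ H] [CompleteSpace H]
    [SecondCountableTopology H] [MeasurableSpace H] [BorelSpace H]
    (T : Ω → (H →L[ℂ] H)) (hT : ∀ f : H, Measurable fun ω => T ω f)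
    (V : Ω → (H ≃ₗᵢ[ℂ] H))
    (hinv : ∀ ω (f : H), T (τ ω) f = V ω (T ω ((V ω).symm f))) :
    ∃ K : Set ℂ, IsCompact K ∧ ∀ᵐ ω ∂μ, spectrum ℂ (T ω) = K := by
  rcases subsingleton_or_nontrivial H with hH | hH
  · exact ⟨∅, isCompact_empty, ae_of_all μ fun ω => spectrum.of_subsingleton (T ω)⟩
  obtain ⟨Z, hZc, hZ⟩ := TopologicalSpace.exists_countable_dense ℂ
  have := hZc.to_subtype
  have hconj : ∀ ω, T (τ ω) = (V ω : H →L[ℂ] H) ∘L T ω ∘L ((V ω).symm : H →L[ℂ] H) :=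
    fun ω => ext (hinv ω)
  obtain ⟨ω₀, hω₀⟩ := hτ.toPreErgodic.exists_ae_forall_eq_of_comp_eq
    (f := fun (z : Z) ω => (T ω).resolventModulus z)
    (fun z => measurable_resolventModulus hT z)
    (fun z => funext fun ω => by rw [Function.comp_apply, hconj, resolventModulus_conj])
  refine ⟨spectrum ℂ (T ω₀), spectrum.isCompact _, ?_⟩
  filter_upwards [hω₀] with ω hω
  exact spectrum_eq_of_eqOn_resolventModulus hZ fun z hz => hω ⟨z, hz⟩

/-- Self-averaging of the spectrum: for a complete probability space, an
ergodic measure-preserving transformation `τ`, and a random bounded operator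
`T` on a separable complex Hilbert space which is unitarily invariant under
`τ`, there is a fixed compact set `K ⊆ ℂ` equal to `spectrum ℂ (T ω)` almost
surely. -/
theorem spectrum_of_metrically_transitive_operator_ae_constant
    {Ω : Type*} [MeasurableSpace Ω] (μ : Measure Ω) [IsProbabilityMeasure μ]
    (hμ : μ.IsComplete)
    {τ : Ω → Ω} (hτ : Ergodic τ μ)
    {H : Type*} [NormedAddCommGroup H] [InnerProductSpace ℂ H] [CompleteSpace H]
    [SecondCountableTopology H] [MeasurableSpace H] [BorelSpace H]
    (T : Ω → (H →L[ℂ] H)) (hT : ∀ f : H, Measurable fun ω => T ω f)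
    (V : Ω → (H ≃ₗᵢ[ℂ] H))
    (hinv : ∀ ω (f : H), T (τ ω) f = V ω (T ω ((V ω).symm f))) :
    ∃ K : Set ℂ, IsCompact K ∧ ∀ᵐ ω ∂μ, spectrum ℂ (T ω) = K :=
  spectrum_of_metrically_transitive_operator_ae_constant_general μ hτ T hT V hinv
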